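/- arXiv:2508.15779 — 2 statements merged into one kernel-verified Lean document; each statement's English description precedes it below -/
import Mathlib

section
/- For all positive integers n and k, the number of 2×n weakly increasing matrices with entries in {1,…,k} equals the number of pairs of sequences (x₁ ≤ x₂ ≤ ⋯ ≤ x_{k−1}, y₁ ≤ y₂ ≤ ⋯ ≤ y_{k−1}) with all terms in {0,1,…,n} satisfying y_i ≤ x_i for every i ∈ {1,…,k−1}. -/
/-- The set of `2 × n` weakly increasing matrices with entries in `{1, …, k}`:
entries increase weakly along each row and down each column. -/
def WeaklyIncreasingMatrices (n k : ℕ) : Set (Fin 2 → Fin n → ℕ) :=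
  {M | (∀ i j, 1 ≤ M i j ∧ M i j ≤ k) ∧
       (∀ (i i' : Fin 2) (j j' : Fin n), i ≤ i' → j ≤ j' → M i j ≤ M i' j')}

open Finset

/-- A downward-closed finset of `Fin m` is an initial segment. -/
lemma aux_mem_iff_lt_card {m : ℕ} (S : Finset (Fin m))
    (h : ∀ a b : Fin m, a ≤ b → b ∈ S → a ∈ S) (t : Fin m) :
    t ∈ S ↔ (t : ℕ) < S.card := by
  constructor
  · intro ht
    have hsub : Finset.Iic t ⊆ S := fun a ha => h a t (Finset.mem_Iic.mp ha) ht
    have := Finset.card_le_card hsub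
    rw [Fin.card_Iic] at this
    omega
  · intro hlt
    by_contra ht
    have hsub : S ⊆ Finset.Iio t := by
      intro a ha
      rw [Finset.mem_Iio]
      by_contra hle
      exact ht (h t a (Fin.not_lt.mp hle) ha)
    have := Finset.card_le_card hsub
    rw [Fin.card_Iio] at this
    omega

lemma aux_card_filter_lt (n c : ℕ) (hc : c ≤ n) :
    (univ.filter (fun j : Fin n => (j : ℕ) < c)).card = c := by
  have himg : (univ.filter (fun j : Fin n => (j : ℕ) < c)).image Fin.val = Finset.range c := by
    ext a
    simp only [Finset.mem_image, Finset.mem_filter, Finset.mem_univ, true_and, Finset.mem_range]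
    constructor
    · rintro ⟨j, hj, rfl⟩; exact hj
    · intro ha; exact ⟨⟨a, lt_of_lt_of_le ha hc⟩, ha, rfl⟩
  have := congrArg Finset.card himg
  rwa [Finset.card_image_of_injective _ Fin.val_injective, Finset.card_range] at this

/-- Count of positions of a row with value at most `v`. -/
def cnt {n : ℕ} (r : Fin n → ℕ) (v : ℕ) : ℕ := (univ.filter (fun j => r j ≤ v)).card

lemma cnt_le_n {n : ℕ} (r : Fin n → ℕ) (v : ℕ) : cnt r v ≤ n := by
  have := Finset.card_filter_le (univ : Finset (Fin n)) (fun j => r j ≤ v)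
  simpa [cnt] using this

lemma cnt_mono {n : ℕ} (r : Fin n → ℕ) {v v' : ℕ} (h : v ≤ v') : cnt r v ≤ cnt r v' := by
  apply Finset.card_le_card
  intro j hj
  simp only [Finset.mem_filter, Finset.mem_univ, true_and] at *
  omega

lemma cnt_anti {n : ℕ} {r r' : Fin n → ℕ} (h : ∀ j, r j ≤ r' j) (v : ℕ) :
    cnt r' v ≤ cnt r v := by
  apply Finset.card_le_card
  intro j hj
  simp only [Finset.mem_filter, Finset.mem_univ, true_and] at *
  exact (h j).trans hj

/-- For a weakly increasing row, `r j ≤ v` iff `j` is before the count. -/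
lemma le_iff_lt_cnt {n : ℕ} (r : Fin n → ℕ)
    (hr : ∀ j j' : Fin n, j ≤ j' → r j ≤ r j') (j : Fin n) (v : ℕ) :
    r j ≤ v ↔ (j : ℕ) < cnt r v := by
  have h := aux_mem_iff_lt_card (univ.filter (fun j => r j ≤ v))
    (fun a b hab hb => by
      simp only [Finset.mem_filter, Finset.mem_univ, true_and] at *
      exact (hr a b hab).trans hb) j
  simpa [cnt] using h

lemma aux_card_le_iff {m : ℕ} (x : Fin m → ℕ) (hx : Monotone x) (s : Fin m) (j : ℕ) :
    (univ.filter (fun t => x t ≤ j)).card ≤ (s : ℕ) ↔ j < x s := by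
  have h := aux_mem_iff_lt_card (univ.filter (fun t => x t ≤ j))
    (fun a b hab hb => by
      simp only [Finset.mem_filter, Finset.mem_univ, true_and] at *
      exact (hx hab).trans hb) s
  simp only [Finset.mem_filter, Finset.mem_univ, true_and] at h
  omega

theorem count_eq_count_dominated_sequence_pairs (n k : ℕ) (hn : 0 < n) (hk : 0 < k) :
    (WeaklyIncreasingMatrices n k).ncard =
      {p : (Fin (k - 1) → ℕ) × (Fin (k - 1) → ℕ) |
        Monotone p.1 ∧ Monotone p.2 ∧
        (∀ i, p.1 i ≤ n) ∧ (∀ i, p.2 i ≤ n) ∧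
        (∀ i, p.2 i ≤ p.1 i)}.ncard := by
  classical
  set A := WeaklyIncreasingMatrices n k with hA
  set B := {p : (Fin (k - 1) → ℕ) × (Fin (k - 1) → ℕ) |
        Monotone p.1 ∧ Monotone p.2 ∧
        (∀ i, p.1 i ≤ n) ∧ (∀ i, p.2 i ≤ n) ∧
        (∀ i, p.2 i ≤ p.1 i)} with hB
  set f : (Fin 2 → Fin n → ℕ) → (Fin (k - 1) → ℕ) × (Fin (k - 1) → ℕ) :=
    fun M => (fun t => cnt (M 0) ((t : ℕ) + 1), fun t => cnt (M 1) ((t : ℕ) + 1)) with hf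
  -- injectivity on A
  have hinj : Set.InjOn f A := by
    intro M hM M' hM' hfe
    obtain ⟨hb, hmono⟩ := hM
    obtain ⟨hb', hmono'⟩ := hM'
    have h1e := congrArg Prod.fst hfe
    have h2e := congrArg Prod.snd hfe
    simp only [hf] at h1e h2e
    funext i j
    have hrow : ∀ j j' : Fin n, j ≤ j' → M i j ≤ M i j' :=
      fun a b hab => hmono i i a b le_rfl hab
    have hrow' : ∀ j j' : Fin n, j ≤ j' → M' i j ≤ M' i j' :=
      fun a b hab => hmono' i i a b le_rfl hab
    have key : ∀ v, M i j ≤ v ↔ M' i j ≤ v := by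
      intro v
      rcases Nat.lt_or_ge v 1 with h0 | h1
      · have := (hb i j).1
        have := (hb' i j).1
        omega
      rcases Nat.lt_or_ge v k with hv | hv
      · have hvk : v - 1 < k - 1 := by omega
        have hcnt : cnt (M i) v = cnt (M' i) v := by
          fin_cases i
          · have := congrFun h1e ⟨v - 1, hvk⟩
            simpa [Nat.sub_add_cancel h1] using this
          · have := congrFun h2e ⟨v - 1, hvk⟩
            simpa [Nat.sub_add_cancel h1] using this
        rw [le_iff_lt_cnt (M i) hrow j v, hcnt, ← le_iff_lt_cnt (M' i) hrow' j v]
      · have := (hb i j).2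
        have := (hb' i j).2
        constructor <;> intro <;> omega
    exact le_antisymm ((key (M' i j)).mpr le_rfl) ((key (M i j)).mp le_rfl)
  -- image
  have himg : f '' A = B := by
    apply Set.Subset.antisymm
    · rintro p ⟨M, ⟨hb, hmono⟩, rfl⟩
      have hdom : ∀ j : Fin n, M 0 j ≤ M 1 j :=
        fun j => hmono 0 1 j j (by decide) le_rfl
      refine ⟨?_, ?_, fun t => cnt_le_n _ _, fun t => cnt_le_n _ _, fun t => cnt_anti hdom _⟩
      · intro t t' htt'
        exact cnt_mono _ (by have := Fin.le_def.mp htt'; omega)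
      · intro t t' htt'
        exact cnt_mono _ (by have := Fin.le_def.mp htt'; omega)
    · rintro ⟨x, y⟩ ⟨hx, hy, hxn, hyn, hyx⟩
      set row : (Fin (k - 1) → ℕ) → Fin n → ℕ :=
        fun z j => 1 + (univ.filter (fun t => z t ≤ (j : ℕ))).card with hrowdef
      have hrowle : ∀ (z z' : Fin (k - 1) → ℕ), (∀ t, z' t ≤ z t) →
          ∀ j j' : Fin n, (j : ℕ) ≤ (j' : ℕ) → row z j ≤ row z' j' := by
        intro z z' hzz j j' hjj
        have : (univ.filter (fun t => z t ≤ (j : ℕ))) ⊆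
            (univ.filter (fun t => z' t ≤ (j' : ℕ))) := by
          intro t ht
          simp only [Finset.mem_filter, Finset.mem_univ, true_and] at *
          exact le_trans (hzz t) (le_trans ht hjj)
        simpa [hrowdef] using Finset.card_le_card this
      refine ⟨fun i => if i = 0 then row x else row y, ⟨?_, ?_⟩, ?_⟩
      · intro i j
        constructor
        · by_cases h : i = 0 <;> simp [h, hrowdef]
        · have hcard : ∀ z : Fin (k - 1) → ℕ,
              (univ.filter (fun t => z t ≤ (j : ℕ))).card ≤ k - 1 := by
            intro z
            have := Finset.card_filter_le (univ : Finset (Fin (k - 1)))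
              (fun t => z t ≤ (j : ℕ))
            simpa using this
          by_cases h : i = 0 <;> simp only [h, if_true, if_false, hrowdef] <;>
            [have := hcard x; have := hcard y] <;> omega
      · intro i i' j j' hii hjj
        have hjj' : (j : ℕ) ≤ (j' : ℕ) := hjj
        fin_cases i <;> fin_cases i'
        · simpa using hrowle x x (fun t => le_rfl) j j' hjj'
        · simpa using hrowle x y hyx j j' hjj'
        · exact absurd hii (by decide)
        · simpa using hrowle y y (fun t => le_rfl) j j' hjj'
      · have hkey : ∀ (z : Fin (k - 1) → ℕ), Monotone z → (∀ t, z t ≤ n) →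
            (fun s : Fin (k - 1) => cnt (row z) ((s : ℕ) + 1)) = z := by
          intro z hz hzn
          funext s
          have hfe : (univ.filter (fun j : Fin n => row z j ≤ (s : ℕ) + 1)) =
              (univ.filter (fun j : Fin n => (j : ℕ) < z s)) := by
            apply Finset.filter_congr
            intro j _
            have h1 : row z j ≤ (s : ℕ) + 1 ↔
                (univ.filter (fun t => z t ≤ (j : ℕ))).card ≤ (s : ℕ) := by
              simp only [hrowdef]; omega
            rw [h1, aux_card_le_iff z hz s (j : ℕ)]
          simp only [cnt, hfe]
          exact aux_card_filter_lt n (z s) (hzn s)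
        have h0 : (fun i : Fin 2 => if i = 0 then row x else row y) 0 = row x := by simp
        have h1 : (fun i : Fin 2 => if i = 0 then row x else row y) 1 = row y := by simp
        simp only [hf, h0, h1]
        exact Prod.ext (hkey x hx hxn) (hkey y hy hyn)
  rw [← Set.ncard_image_of_injOn hinj, himg]
end

section
/- For all positive integers n and k, the number of pairs (P₁, P₂) of non-intersecting lattice paths, where P₁ goes from (0,0) to (k−1, n) and P₂ goes from (1,−1) to (k, n−1), equals C(n+k−1, k−1)² − C(n+k−1, k−2) · C(n+k−1, k). -/
/-- A lattice path from `a` to `b` in `ℤ²`: a finite sequence of points starting at `a`,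
ending at `b`, where each consecutive difference is `(1,0)` or `(0,1)`. -/
def IsLatticePath (p : List (ℤ × ℤ)) (a b : ℤ × ℤ) : Prop :=
  p.head? = some a ∧ p.getLast? = some b ∧
    List.Chain' (fun u v => v = u + (1, 0) ∨ v = u + (0, 1)) p

/-- Binomial coefficient `C(a, b)` with an integer lower index, equal to `0` when `b < 0`
(and, via `Nat.choose`, equal to `0` when `b > a`). -/
def intChoose (a : ℕ) (b : ℤ) : ℤ :=
  if 0 ≤ b then (a.choose b.toNat : ℤ) else 0



def stepv (b : Bool) : ℤ × ℤ := if b then (1, 0) else (0, 1)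

def latticeRel (u v : ℤ × ℤ) : Prop := v = u + (1, 0) ∨ v = u + (0, 1)

def pathOf (a : ℤ × ℤ) (l : List Bool) : List (ℤ × ℤ) :=
  l.scanl (fun u b => u + stepv b) a

lemma pathOf_nil (a : ℤ × ℤ) : pathOf a [] = [a] := rfl

lemma pathOf_cons (a : ℤ × ℤ) (b : Bool) (l : List Bool) :
    pathOf a (b :: l) = a :: pathOf (a + stepv b) l := List.scanl_cons

lemma pathOf_length (a : ℤ × ℤ) (l : List Bool) : (pathOf a l).length = l.length + 1 :=
  List.length_scanl

lemma pathOf_head? (a : ℤ × ℤ) (l : List Bool) : (pathOf a l).head? = some a := by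
  cases l <;> simp [pathOf_nil, pathOf_cons]

lemma pathOf_chain' (l : List Bool) : ∀ a, List.Chain' latticeRel (pathOf a l) := by
  induction l with
  | nil => intro a; exact List.isChain_singleton a
  | cons b t ih =>
    intro a
    rw [pathOf_cons]; simp only [List.Chain']; rw [List.isChain_cons]
    refine ⟨?_, ih _⟩
    intro y hy
    rw [pathOf_head? _ t] at hy
    cases hy
    cases b
    · exact Or.inr rfl
    · exact Or.inl rfl

lemma pathOf_getLast? (l : List Bool) : ∀ a : ℤ × ℤ,
    (pathOf a l).getLast? = some (a + ((l.count true : ℤ), (l.count false : ℤ))) := by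
  induction l with
  | nil => intro a; simp [pathOf_nil]
  | cons b t ih =>
    intro a
    rw [pathOf_cons, List.getLast?_cons, ih]
    simp only [Option.getD_some, Option.some_inj]
    cases b <;> simp [stepv, List.count_cons, Prod.ext_iff] <;> push_cast <;> ring

lemma pathOf_injective (a : ℤ × ℤ) : Function.Injective (pathOf a) := by
  intro l l' h
  induction l generalizing a l' with
  | nil =>
    cases l' with
    | nil => rfl
    | cons b t =>
      have := congrArg List.length h
      rw [pathOf_length, pathOf_length] at this
      simp at this
  | cons b t ih =>
    cases l' with
    | nil =>
      have := congrArg List.length h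
      rw [pathOf_length, pathOf_length] at this
      simp at this
    | cons b' t' =>
      rw [pathOf_cons, pathOf_cons] at h
      have htl : pathOf (a + stepv b) t = pathOf (a + stepv b') t' := List.tail_eq_of_cons_eq h
      have hb : b = b' := by
        have h1 := pathOf_head? (a + stepv b) t
        rw [htl, pathOf_head? _ t'] at h1
        have h2 : stepv b = stepv b' := by
          have := Option.some.inj h1
          exact (add_left_cancel this).symm
        cases b <;> cases b' <;> simp [stepv, Prod.ext_iff] at h2 ⊢
      subst hb
      rw [ih (a + stepv b) htl]

lemma exists_pathOf {p : List (ℤ × ℤ)} : ∀ {a : ℤ × ℤ}, p.head? = some a →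
    List.Chain' latticeRel p → ∃ l, p = pathOf a l := by
  induction p with
  | nil => intro a h; simp at h
  | cons x t ih =>
    intro a hh hc
    have hx : x = a := by simpa using hh
    subst hx
    cases t with
    | nil => exact ⟨[], rfl⟩
    | cons y s =>
      have hrel : latticeRel x y := (List.isChain_cons_cons.1 hc).1
      have hc' : List.Chain' latticeRel (y :: s) := (List.isChain_cons_cons.1 hc).2
      have hstep : ∃ b, y = x + stepv b := by
        rcases hrel with h | h
        · exact ⟨true, h⟩
        · exact ⟨false, h⟩
      obtain ⟨b, rfl⟩ := hstep
      obtain ⟨l, hl⟩ := ih (a := x + stepv b) rfl hc'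
      exact ⟨b :: l, by rw [pathOf_cons, ← hl]⟩


def boolSet (m d : ℕ) : Set (List Bool) := {l | l.length = m ∧ l.count true = d}

lemma boolSet_finite (m d : ℕ) : (boolSet m d).Finite :=
  (List.finite_length_eq Bool m).subset (fun l hl => hl.1)

lemma ncard_boolSet (m : ℕ) : ∀ d, (boolSet m d).ncard = m.choose d := by
  induction m with
  | zero =>
    intro d
    match d with
    | 0 =>
      have : boolSet 0 0 = {[]} := by
        ext l
        constructor
        · rintro ⟨h1, _⟩; exact List.length_eq_zero_iff.1 h1
        · rintro rfl; exact ⟨rfl, rfl⟩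
      rw [this]; simp
    | d+1 =>
      have : boolSet 0 (d+1) = ∅ := by
        ext l
        simp only [Set.mem_empty_iff_false, iff_false]
        rintro ⟨h1, h2⟩
        rw [List.length_eq_zero_iff.1 h1] at h2; simp at h2
      rw [this]; simp
  | succ m ih =>
    intro d
    match d with
    | 0 =>
      have : boolSet (m+1) 0 = (fun t => false :: t) '' boolSet m 0 := by
        ext l
        constructor
        · rintro ⟨h1, h2⟩
          match l with
          | [] => simp at h1
          | b :: t =>
            have hb : b = false := by
              cases b
              · rfl
              · simp [List.count_cons] at h2
            subst hb
            exact ⟨t, ⟨by simpa using h1, by simpa using h2⟩, rfl⟩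
        · rintro ⟨t, ⟨h1, h2⟩, rfl⟩
          exact ⟨by simp [h1], by simpa using h2⟩
      rw [this, Set.ncard_image_of_injective _ (fun a b h => by simpa using h), ih]
      simp
    | d+1 =>
      have : boolSet (m+1) (d+1) =
          (fun t => true :: t) '' boolSet m d ∪ (fun t => false :: t) '' boolSet m (d+1) := by
        ext l
        constructor
        · rintro ⟨h1, h2⟩
          match l with
          | [] => simp at h1
          | b :: t =>
            cases b
            · exact Or.inr ⟨t, ⟨by simpa using h1, by simpa using h2⟩, rfl⟩
            · refine Or.inl ⟨t, ⟨by simpa using h1, ?_⟩, rfl⟩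
              simpa [List.count_cons] using h2
        · rintro (⟨t, ⟨h1, h2⟩, rfl⟩ | ⟨t, ⟨h1, h2⟩, rfl⟩)
          · exact ⟨by simp [h1], by simp [List.count_cons, h2]⟩
          · exact ⟨by simp [h1], by simpa using h2⟩
      rw [this, Set.ncard_union_eq ?dis ?f1 ?f2]
      · rw [Set.ncard_image_of_injective _ (fun a b h => by simpa using h),
          Set.ncard_image_of_injective _ (fun a b h => by simpa using h), ih, ih,
          Nat.choose_succ_succ]
      case dis =>
        rw [Set.disjoint_left]
        rintro l ⟨t, _, rfl⟩ ⟨t', _, h⟩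
        simp at h
      case f1 => exact ((boolSet_finite m d).image _)
      case f2 => exact ((boolSet_finite m (d+1)).image _)

lemma count_true_add_count_false (l : List Bool) : l.count true + l.count false = l.length := by
  induction l with
  | nil => rfl
  | cons b t ih => cases b <;> simp [List.count_cons] <;> omega

lemma isLatticePath_iff {a b : ℤ × ℤ} {p : List (ℤ × ℤ)} : IsLatticePath p a b ↔
    ∃ l, p = pathOf a l ∧ a + ((l.count true : ℤ), (l.count false : ℤ)) = b := by
  constructor
  · rintro ⟨h1, h2, h3⟩
    obtain ⟨l, rfl⟩ := exists_pathOf h1 h3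
    refine ⟨l, rfl, ?_⟩
    rw [pathOf_getLast?] at h2
    exact Option.some.inj h2
  · rintro ⟨l, rfl, hb⟩
    exact ⟨pathOf_head? a l, by rw [pathOf_getLast?, hb], pathOf_chain' l a⟩

lemma paths_eq {a b : ℤ × ℤ} {dx dy : ℕ} (hx : b.1 = a.1 + dx) (hy : b.2 = a.2 + dy) :
    {p | IsLatticePath p a b} = pathOf a '' boolSet (dx + dy) dx := by
  ext p
  simp only [Set.mem_setOf_eq, isLatticePath_iff, Set.mem_image]
  constructor
  · rintro ⟨l, rfl, hb⟩
    refine ⟨l, ⟨?_, ?_⟩, rfl⟩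
    · have h1 : a.1 + (l.count true : ℤ) = b.1 := by
        have := congrArg Prod.fst hb; simpa using this
      have h2 : a.2 + (l.count false : ℤ) = b.2 := by
        have := congrArg Prod.snd hb; simpa using this
      have := count_true_add_count_false l
      omega
    · have h1 : a.1 + (l.count true : ℤ) = b.1 := by
        have := congrArg Prod.fst hb; simpa using this
      omega
  · rintro ⟨l, ⟨hlen, hcnt⟩, rfl⟩
    refine ⟨l, rfl, ?_⟩
    have := count_true_add_count_false l
    have hcf : l.count false = dy := by omega
    rw [hcnt, hcf, Prod.ext_iff]
    constructor
    · simpa using hx.symm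
    · simpa using hy.symm

lemma paths_finite {a b : ℤ × ℤ} {dx dy : ℕ} (hx : b.1 = a.1 + dx) (hy : b.2 = a.2 + dy) :
    {p | IsLatticePath p a b}.Finite := by
  rw [paths_eq hx hy]; exact (boolSet_finite _ _).image _

lemma paths_ncard {a b : ℤ × ℤ} {dx dy : ℕ} (hx : b.1 = a.1 + dx) (hy : b.2 = a.2 + dy) :
    {p | IsLatticePath p a b}.ncard = (dx + dy).choose dx := by
  rw [paths_eq hx hy, Set.ncard_image_of_injective _ (pathOf_injective a), ncard_boolSet]

lemma paths_empty {a b : ℤ × ℤ} (h : b.1 < a.1 ∨ b.2 < a.2) :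
    {p | IsLatticePath p a b} = ∅ := by
  ext p
  simp only [Set.mem_setOf_eq, isLatticePath_iff, Set.mem_empty_iff_false, iff_false]
  rintro ⟨l, rfl, hb⟩
  have h1 : a.1 + (l.count true : ℤ) = b.1 := by
    have := congrArg Prod.fst hb; simpa using this
  have h2 : a.2 + (l.count false : ℤ) = b.2 := by
    have := congrArg Prod.snd hb; simpa using this
  omega

lemma pathOf_level (l : List Bool) : ∀ (a : ℤ × ℤ) (t : ℕ) (h : t < (pathOf a l).length),
    ((pathOf a l)[t]).1 + ((pathOf a l)[t]).2 = a.1 + a.2 + t := by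
  induction l with
  | nil =>
    intro a t h
    have ht : t = 0 := by simpa [pathOf_nil] using h
    subst ht; simp [pathOf_nil]
  | cons b s ih =>
    intro a t h
    cases t with
    | zero => simp [pathOf_cons]
    | succ t =>
      have h' : t < (pathOf (a + stepv b) s).length := by
        simpa [pathOf_cons] using h
      have := ih (a + stepv b) t h'
      have hstep : (a + stepv b).1 + (a + stepv b).2 = a.1 + a.2 + 1 := by
        cases b <;> simp [stepv] <;> ring
      have hg : (pathOf a (b :: s))[t+1] = (pathOf (a + stepv b) s)[t] := by
        simp [pathOf_cons]
      rw [hg, this, hstep]; push_cast; ring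

lemma lp_ne_nil {p : List (ℤ × ℤ)} {a b : ℤ × ℤ} (h : IsLatticePath p a b) : p ≠ [] := by
  intro hp; rw [hp] at h; simp [IsLatticePath] at h

lemma lp_level {p : List (ℤ × ℤ)} {a b : ℤ × ℤ} (h : IsLatticePath p a b)
    (t : ℕ) (ht : t < p.length) : (p[t]).1 + (p[t]).2 = a.1 + a.2 + t := by
  obtain ⟨l, rfl, -⟩ := isLatticePath_iff.1 h
  exact pathOf_level l a t ht

lemma lp_getElem?_zero {p : List (ℤ × ℤ)} {a b : ℤ × ℤ} (h : IsLatticePath p a b) :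
    p[0]? = some a := by rw [← List.head?_eq_getElem?]; exact h.1

lemma lp_getElem?_last {p : List (ℤ × ℤ)} {a b : ℤ × ℤ} (h : IsLatticePath p a b) :
    p[p.length - 1]? = some b := by rw [← List.getLast?_eq_getElem?]; exact h.2.1

lemma lp_length {p : List (ℤ × ℤ)} {a b : ℤ × ℤ} (h : IsLatticePath p a b) :
    (p.length : ℤ) = b.1 + b.2 - (a.1 + a.2) + 1 := by
  have hne := lp_ne_nil h
  have hpos : 0 < p.length := List.length_pos_iff.2 hne
  have hlt : p.length - 1 < p.length := by omega
  have hb : p[p.length - 1] = b := by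
    have := lp_getElem?_last h
    rwa [List.getElem?_eq_getElem hlt, Option.some_inj] at this
  have := lp_level h (p.length - 1) hlt
  rw [hb] at this
  have : b.1 + b.2 = a.1 + a.2 + ((p.length : ℤ) - 1) := by
    rw [this]; push_cast [Nat.cast_sub hpos]; ring
  linarith

lemma lp_chain_step {p : List (ℤ × ℤ)} {a b : ℤ × ℤ} (h : IsLatticePath p a b)
    (t : ℕ) (ht : t + 1 < p.length) : latticeRel (p[t]) (p[t+1]) := by
  have hc := h.2.2
  simp only [List.Chain'] at hc; rw [List.isChain_iff_getElem] at hc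
  have := hc t (by omega)
  exact this

def swapAt (p q : List (ℤ × ℤ)) (s : ℕ) : List (ℤ × ℤ) := p.take (s+1) ++ q.drop (s+1)

lemma swapAt_length {p q : List (ℤ × ℤ)} {s : ℕ} (hs : s + 1 ≤ p.length)
    (hlen : p.length = q.length) : (swapAt p q s).length = p.length := by
  simp [swapAt]; omega

lemma swapAt_getElem?_of_le {p q : List (ℤ × ℤ)} {s t : ℕ} (hs : s + 1 ≤ p.length)
    (ht : t ≤ s) : (swapAt p q s)[t]? = p[t]? := by
  rw [swapAt, List.getElem?_append_left (by rw [List.length_take]; omega),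
    List.getElem?_take_of_lt (by omega)]

lemma swapAt_getElem?_of_gt {p q : List (ℤ × ℤ)} {s t : ℕ} (hs : s + 1 ≤ p.length)
    (ht : s < t) : (swapAt p q s)[t]? = q[t]? := by
  have hl : (p.take (s+1)).length = s + 1 := by rw [List.length_take]; omega
  rw [swapAt, List.getElem?_append_right (by omega), List.getElem?_drop, hl]
  congr 1; omega

lemma swapAt_swapAt {p q : List (ℤ × ℤ)} {s : ℕ} (hs : s + 1 ≤ p.length) (hs' : s + 1 ≤ q.length) :
    swapAt (swapAt p q s) (swapAt q p s) s = p := by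
  have hl : (p.take (s+1)).length = s + 1 := by rw [List.length_take]; omega
  rw [swapAt, swapAt, swapAt, List.take_left' hl, List.drop_left' (by rw [List.length_take]; omega)]
  exact List.take_append_drop _ _

lemma swapAt_isLatticePath {p q : List (ℤ × ℤ)} {a₁ b₁ a₂ b₂ : ℤ × ℤ} {s : ℕ}
    (hp : IsLatticePath p a₁ b₁) (hq : IsLatticePath q a₂ b₂)
    (hlen : p.length = q.length) (hs : s + 1 < p.length) (hmeet : p[s]? = q[s]?) :
    IsLatticePath (swapAt p q s) a₁ b₂ := by
  have hl : (p.take (s+1)).length = s + 1 := by rw [List.length_take]; omega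
  refine ⟨?_, ?_, ?_⟩
  · rw [List.head?_eq_getElem?, swapAt_getElem?_of_le (by omega) (by omega)]
    exact lp_getElem?_zero hp
  · rw [List.getLast?_eq_getElem?, swapAt_length (by omega) hlen,
      swapAt_getElem?_of_gt (by omega) (by omega), hlen]
    exact lp_getElem?_last hq
  · rw [swapAt]; simp only [List.Chain']; rw [List.isChain_append]
    refine ⟨hp.2.2.take _, hq.2.2.drop _, ?_⟩
    intro x hx y hy
    have hxs : x = p[s]'(by omega) := by
      rw [List.getLast?_eq_getElem?, hl, Nat.add_sub_cancel,
        List.getElem?_take_of_lt (by omega), List.getElem?_eq_getElem (by omega)] at hx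
      exact (Option.some_inj.1 hx).symm
    have hys : y = q[s+1]'(by omega) := by
      rw [List.head?_eq_getElem?, List.getElem?_drop, Nat.add_zero,
        List.getElem?_eq_getElem (by omega : s + 1 < q.length)] at hy
      exact (Option.some_inj.1 hy).symm
    have hpq : p[s]'(by omega) = q[s]'(by omega) := by
      rw [List.getElem?_eq_getElem (by omega : s < p.length),
        List.getElem?_eq_getElem (by omega : s < q.length)] at hmeet
      exact Option.some_inj.1 hmeet
    rw [hxs, hys, hpq]
    exact lp_chain_step hq s (by omega)

lemma int_ivt (f : ℕ → ℤ) (m : ℕ) (h0 : f 0 < 0) (hm : 0 ≤ f m)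
    (hstep : ∀ i, i < m → f (i+1) ≤ f i + 1) : ∃ s, s ≤ m ∧ f s = 0 := by
  classical
  have hex : ∃ s, s ≤ m ∧ 0 ≤ f s := ⟨m, le_rfl, hm⟩
  obtain ⟨hsm, hsf⟩ := Nat.find_spec hex
  set s := Nat.find hex with hsdef
  have hs0 : s ≠ 0 := by
    intro h
    rw [h] at hsf
    omega
  have hprev := Nat.find_min hex (m := s - 1) (by omega)
  push_neg at hprev
  have hneg : f (s - 1) < 0 := hprev (by omega)
  have hst := hstep (s - 1) (by omega)
  have hs1 : s - 1 + 1 = s := by omega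
  rw [hs1] at hst
  exact ⟨s, hsm, by omega⟩

def MeetEx (p q : List (ℤ × ℤ)) : Prop := ∃ t, t + 1 < p.length ∧ p[t]? = q[t]?

open scoped Classical in
noncomputable def firstMeet (p q : List (ℤ × ℤ)) : ℕ :=
  if h : MeetEx p q then Nat.find h else 0

open scoped Classical in
lemma firstMeet_spec {p q : List (ℤ × ℤ)} (h : MeetEx p q) :
    firstMeet p q + 1 < p.length ∧ p[firstMeet p q]? = q[firstMeet p q]? := by
  rw [firstMeet, dif_pos h]
  exact Nat.find_spec h

open scoped Classical in
lemma firstMeet_min {p q : List (ℤ × ℤ)} (h : MeetEx p q) {t : ℕ}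
    (ht : t < firstMeet p q) : ¬(t + 1 < p.length ∧ p[t]? = q[t]?) := by
  rw [firstMeet, dif_pos h] at ht
  exact Nat.find_min h ht

open scoped Classical in
lemma firstMeet_le {p q : List (ℤ × ℤ)} (h : MeetEx p q) {t : ℕ}
    (ht : t + 1 < p.length ∧ p[t]? = q[t]?) : firstMeet p q ≤ t := by
  rw [firstMeet, dif_pos h]
  exact Nat.find_min' h ht

noncomputable def swapPair (pq : List (ℤ × ℤ) × List (ℤ × ℤ)) :
    List (ℤ × ℤ) × List (ℤ × ℤ) :=
  (swapAt pq.1 pq.2 (firstMeet pq.1 pq.2), swapAt pq.2 pq.1 (firstMeet pq.1 pq.2))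

section Main

variable {p q : List (ℤ × ℤ)} {a₁ a₂ c d : ℤ × ℤ} {L : ℤ}

lemma swap_main (ha₁ : a₁.1 + a₁.2 = 0) (ha₂ : a₂.1 + a₂.2 = 0)
    (hc : c.1 + c.2 = L) (hd : d.1 + d.2 = L)
    (hp : IsLatticePath p a₁ c) (hq : IsLatticePath q a₂ d) (h : MeetEx p q) :
    IsLatticePath (swapPair (p, q)).1 a₁ d ∧ IsLatticePath (swapPair (p, q)).2 a₂ c ∧
      MeetEx (swapPair (p, q)).1 (swapPair (p, q)).2 ∧ swapPair (swapPair (p, q)) = (p, q) := by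
  have hlp : (p.length : ℤ) = L + 1 := by rw [lp_length hp]; omega
  have hlq : (q.length : ℤ) = L + 1 := by rw [lp_length hq]; omega
  have hlen : p.length = q.length := by omega
  obtain ⟨hs, hmeet⟩ := firstMeet_spec h
  set s := firstMeet p q with hsdef
  have hP1 : IsLatticePath (swapAt p q s) a₁ d := swapAt_isLatticePath hp hq hlen hs hmeet
  have hP2 : IsLatticePath (swapAt q p s) a₂ c :=
    swapAt_isLatticePath hq hp hlen.symm (by omega) hmeet.symm
  have hlen1 : (swapAt p q s).length = p.length := swapAt_length (by omega) hlen
  have hlen2 : (swapAt q p s).length = q.length := swapAt_length (by omega) hlen.symm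
  have hiff : ∀ t : ℕ, (swapAt p q s)[t]? = (swapAt q p s)[t]? ↔ p[t]? = q[t]? := by
    intro t
    rcases le_or_gt t s with ht | ht
    · rw [swapAt_getElem?_of_le (by omega) ht, swapAt_getElem?_of_le (by omega) ht]
    · rw [swapAt_getElem?_of_gt (by omega) ht, swapAt_getElem?_of_gt (by omega) ht]
      exact eq_comm
  have hm' : MeetEx (swapAt p q s) (swapAt q p s) := by
    exact ⟨s, by rw [hlen1]; exact hs, (hiff s).2 hmeet⟩
  have hfm : firstMeet (swapAt p q s) (swapAt q p s) = s := by
    apply le_antisymm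
    · exact firstMeet_le hm' ⟨by rw [hlen1]; exact hs, (hiff s).2 hmeet⟩
    · by_contra hlt
      push_neg at hlt
      obtain ⟨h1, h2⟩ := firstMeet_spec hm'
      set s' := firstMeet (swapAt p q s) (swapAt q p s) with hs'def
      exact firstMeet_min h (t := s') hlt ⟨by omega, (hiff s').1 h2⟩
  refine ⟨hP1, hP2, hm', ?_⟩
  show (swapAt (swapAt p q s) (swapAt q p s) _, swapAt (swapAt q p s) (swapAt p q s) _) = (p, q)
  rw [show firstMeet (swapPair (p,q)).1 (swapPair (p,q)).2 = s from hfm]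
  rw [swapAt_swapAt (by omega) (by omega), swapAt_swapAt (by omega) (by omega)]

lemma inter_iff_meetEx (ha₁ : a₁.1 + a₁.2 = 0) (ha₂ : a₂.1 + a₂.2 = 0)
    (hc : c.1 + c.2 = L) (hd : d.1 + d.2 = L) (hcd : c ≠ d)
    (hp : IsLatticePath p a₁ c) (hq : IsLatticePath q a₂ d) :
    (∃ v, v ∈ p ∧ v ∈ q) ↔ MeetEx p q := by
  have hlp : (p.length : ℤ) = L + 1 := by rw [lp_length hp]; omega
  have hlq : (q.length : ℤ) = L + 1 := by rw [lp_length hq]; omega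
  have hlen : p.length = q.length := by omega
  constructor
  · rintro ⟨v, hvp, hvq⟩
    obtain ⟨i, hi, rfl⟩ := List.mem_iff_getElem.1 hvp
    obtain ⟨j, hj, hji⟩ := List.mem_iff_getElem.1 hvq
    have h1 := lp_level hp i hi
    have h2 := lp_level hq j hj
    rw [hji] at h2
    have hij : i = j := by omega
    subst hij
    refine ⟨i, ?_, ?_⟩
    · rcases (by omega : i + 1 < p.length ∨ i = p.length - 1) with h | h
      · exact h
      · exfalso
        have hpl := lp_getElem?_last hp
        have hql := lp_getElem?_last hq
        rw [List.getElem?_eq_getElem (by omega), Option.some_inj] at hpl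
        rw [List.getElem?_eq_getElem (by omega), Option.some_inj] at hql
        apply hcd
        have e1 : c = p[i]'hi := by rw [← hpl]; congr 1; omega
        have e2 : d = q[i]'hj := by rw [← hql]; congr 1; omega
        rw [e1, e2, hji]
    · rw [List.getElem?_eq_getElem hi, List.getElem?_eq_getElem hj, hji]
  · rintro ⟨t, ht, hmeet⟩
    have htq : t < q.length := by omega
    have : p[t]'(by omega) = q[t]'htq := by
      rw [List.getElem?_eq_getElem (by omega), List.getElem?_eq_getElem htq,
        Option.some_inj] at hmeet
      exact hmeet
    refine ⟨p[t]'(by omega), List.getElem_mem _, ?_⟩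
    rw [this]
    exact List.getElem_mem _

end Main

lemma bpair_meet {p q : List (ℤ × ℤ)} {n k : ℕ} (hn : 0 < n) (hk : 0 < k)
    (hp : IsLatticePath p (0, 0) ((k : ℤ), (n : ℤ) - 1))
    (hq : IsLatticePath q (1, -1) ((k : ℤ) - 1, (n : ℤ))) : MeetEx p q := by
  have hlp : (p.length : ℤ) = (n : ℤ) + k := by rw [lp_length hp]; push_cast; ring
  have hlq : (q.length : ℤ) = (n : ℤ) + k := by rw [lp_length hq]; push_cast; ring
  have hplen : p.length = n + k := by omega
  have hqlen : q.length = n + k := by omega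
  set f : ℕ → ℤ := fun t => (p[t]?.getD 0).1 - (q[t]?.getD 0).1 with hf
  have fval : ∀ t (ht : t < p.length), f t = (p[t]'ht).1 - (q[t]'(by omega)).1 := by
    intro t ht
    rw [hf]
    simp only
    rw [List.getElem?_eq_getElem ht, List.getElem?_eq_getElem (show t < q.length by omega)]
    rfl
  have hp0' : p[0]'(by omega) = ((0 : ℤ), (0 : ℤ)) := by
    have := lp_getElem?_zero hp
    rwa [List.getElem?_eq_getElem (by omega), Option.some_inj] at this
  have hq0' : q[0]'(by omega) = ((1 : ℤ), (-1 : ℤ)) := by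
    have := lp_getElem?_zero hq
    rwa [List.getElem?_eq_getElem (by omega), Option.some_inj] at this
  have hpl' : p[n + k - 1]'(by omega) = ((k : ℤ), (n : ℤ) - 1) := by
    have h2 := lp_getElem?_last hp
    rw [List.getElem?_eq_getElem (by omega : p.length - 1 < p.length), Option.some_inj] at h2
    rw [← h2]
    congr 1
    omega
  have hql' : q[n + k - 1]'(by omega) = ((k : ℤ) - 1, (n : ℤ)) := by
    have h2 := lp_getElem?_last hq
    rw [List.getElem?_eq_getElem (by omega : q.length - 1 < q.length), Option.some_inj] at h2
    rw [← h2]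
    congr 1
    omega
  have h0 : f 0 < 0 := by rw [fval 0 (by omega), hp0', hq0']; norm_num
  have hm : 0 ≤ f (n + k - 1) := by rw [fval _ (by omega), hpl', hql']; norm_num
  have hstep : ∀ i, i < n + k - 1 → f (i + 1) ≤ f i + 1 := by
    intro i hi
    rw [fval i (by omega), fval (i + 1) (by omega)]
    have h1 := lp_chain_step hp i (by omega)
    have h2 := lp_chain_step hq i (by omega)
    rcases h1 with h1 | h1 <;> rcases h2 with h2 | h2 <;>
      rw [h1, h2] <;> simp [Prod.fst_add] <;> omega
  obtain ⟨s, hsm, hs0⟩ := int_ivt f (n + k - 1) h0 hm hstep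
  have hslt : s < p.length := by omega
  have hsltq : s < q.length := by omega
  rw [fval s hslt] at hs0
  have hl1 := lp_level hp s hslt
  have hl2 := lp_level hq s hsltq
  have heq : p[s]'hslt = q[s]'hsltq := by
    apply Prod.ext
    · omega
    · simp only [Prod.fst, Prod.snd] at *
      omega
  have hsne : s ≠ n + k - 1 := by
    intro hcon
    subst hcon
    rw [hpl', hql'] at heq
    have := congrArg Prod.fst heq
    simp at this
    omega
  refine ⟨s, by omega, ?_⟩
  rw [List.getElem?_eq_getElem hslt, List.getElem?_eq_getElem hsltq, heq]

lemma ncard_sprod {α β : Type*} {s : Set α} {t : Set β} :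
    (s ×ˢ t).ncard = s.ncard * t.ncard := by
  have h1 : (s ×ˢ t).ncard = Nat.card (s ×ˢ t : Set (α × β)) := rfl
  have h2 : (s ×ˢ t : Set (α × β)) ≃ (s × t) := Equiv.Set.prod s t
  rw [h1, Nat.card_eq_of_bijective h2 h2.bijective, Nat.card_prod]
  rfl

theorem count_nonintersecting_path_pairs (n k : ℕ) (hn : 0 < n) (hk : 0 < k) :
    ({pq : List (ℤ × ℤ) × List (ℤ × ℤ) |
        IsLatticePath pq.1 (0, 0) ((k : ℤ) - 1, (n : ℤ)) ∧
        IsLatticePath pq.2 (1, -1) ((k : ℤ), (n : ℤ) - 1) ∧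
        ∀ v, v ∈ pq.1 → v ∉ pq.2}.ncard : ℤ) =
      intChoose (n + k - 1) ((k : ℤ) - 1) ^ 2 -
        intChoose (n + k - 1) ((k : ℤ) - 2) * intChoose (n + k - 1) (k : ℤ) := by
  classical
  set a₁ : ℤ × ℤ := (0, 0) with ha₁def
  set a₂ : ℤ × ℤ := (1, -1) with ha₂def
  set b₁ : ℤ × ℤ := ((k : ℤ) - 1, (n : ℤ)) with hb₁def
  set b₂ : ℤ × ℤ := ((k : ℤ), (n : ℤ) - 1) with hb₂def
  set A1 := {p : List (ℤ × ℤ) | IsLatticePath p a₁ b₁} with hA1def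
  set A2 := {p : List (ℤ × ℤ) | IsLatticePath p a₂ b₂} with hA2def
  set B1 := {p : List (ℤ × ℤ) | IsLatticePath p a₁ b₂} with hB1def
  set B2 := {p : List (ℤ × ℤ) | IsLatticePath p a₂ b₁} with hB2def
  -- coordinate facts
  have hxA1 : b₁.1 = a₁.1 + ((k - 1 : ℕ) : ℤ) := by show (k : ℤ) - 1 = 0 + _; omega
  have hyA1 : b₁.2 = a₁.2 + ((n : ℕ) : ℤ) := by show (n : ℤ) = 0 + _; omega
  have hxA2 : b₂.1 = a₂.1 + ((k - 1 : ℕ) : ℤ) := by show (k : ℤ) = 1 + _; omega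
  have hyA2 : b₂.2 = a₂.2 + ((n : ℕ) : ℤ) := by show (n : ℤ) - 1 = -1 + _; omega
  have hxB1 : b₂.1 = a₁.1 + ((k : ℕ) : ℤ) := by show (k : ℤ) = 0 + _; omega
  have hyB1 : b₂.2 = a₁.2 + ((n - 1 : ℕ) : ℤ) := by show (n : ℤ) - 1 = 0 + _; omega
  -- finiteness and cardinalities
  have hA1f : A1.Finite := paths_finite hxA1 hyA1
  have hA2f : A2.Finite := paths_finite hxA2 hyA2
  have hB1f : B1.Finite := paths_finite hxB1 hyB1
  have hA1c : A1.ncard = (n + k - 1).choose (k - 1) := by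
    rw [hA1def, paths_ncard hxA1 hyA1]
    congr 1
    omega
  have hA2c : A2.ncard = (n + k - 1).choose (k - 1) := by
    rw [hA2def, paths_ncard hxA2 hyA2]
    congr 1
    omega
  have hB1c : B1.ncard = (n + k - 1).choose k := by
    rw [hB1def, paths_ncard hxB1 hyB1]
    congr 1
    omega
  have hB2f : B2.Finite := by
    rcases (by omega : k = 1 ∨ 2 ≤ k) with hk1 | hk2
    · rw [hB2def, paths_empty (Or.inl (by show (k : ℤ) - 1 < 1; omega))]
      exact Set.finite_empty
    · exact paths_finite (show b₁.1 = a₂.1 + ((k - 2 : ℕ) : ℤ) by show (k:ℤ) - 1 = 1 + _; omega)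
        (show b₁.2 = a₂.2 + ((n + 1 : ℕ) : ℤ) by show (n:ℤ) = -1 + _; omega)
  have hB2c : (B2.ncard : ℤ) = intChoose (n + k - 1) ((k : ℤ) - 2) := by
    rcases (by omega : k = 1 ∨ 2 ≤ k) with hk1 | hk2
    · rw [hB2def, paths_empty (Or.inl (by show (k : ℤ) - 1 < 1; omega))]
      rw [intChoose, if_neg (by omega)]
      simp
    · rw [hB2def, paths_ncard (show b₁.1 = a₂.1 + ((k - 2 : ℕ) : ℤ) by show (k:ℤ) - 1 = 1 + _; omega)
        (show b₁.2 = a₂.2 + ((n + 1 : ℕ) : ℤ) by show (n:ℤ) = -1 + _; omega)]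
      rw [intChoose, if_pos (by omega)]
      congr 2
      · omega
      · omega
  -- level facts
  have hla₁ : a₁.1 + a₁.2 = 0 := by show (0:ℤ) + 0 = 0; ring
  have hla₂ : a₂.1 + a₂.2 = 0 := by show (1:ℤ) + (-1) = 0; ring
  have hlb₁ : b₁.1 + b₁.2 = (n : ℤ) + k - 1 := by show (k:ℤ) - 1 + n = _; ring
  have hlb₂ : b₂.1 + b₂.2 = (n : ℤ) + k - 1 := by show (k:ℤ) + (n - 1) = _; ring
  have hb₁₂ : b₁ ≠ b₂ := by
    intro h
    rw [hb₁def, hb₂def, Prod.mk.injEq] at h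
    omega
  -- the two pieces
  set M := {pq : List (ℤ × ℤ) × List (ℤ × ℤ) |
      IsLatticePath pq.1 a₁ b₁ ∧ IsLatticePath pq.2 a₂ b₂ ∧
      ∀ v, v ∈ pq.1 → v ∉ pq.2} with hMdef
  set I := {pq : List (ℤ × ℤ) × List (ℤ × ℤ) |
      IsLatticePath pq.1 a₁ b₁ ∧ IsLatticePath pq.2 a₂ b₂ ∧
      ∃ v, v ∈ pq.1 ∧ v ∈ pq.2} with hIdef
  have hunion : M ∪ I = A1 ×ˢ A2 := by
    ext ⟨p, q⟩
    simp only [hMdef, hIdef, Set.mem_union, Set.mem_setOf_eq, Set.mem_prod, hA1def, hA2def]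
    constructor
    · rintro (⟨h1, h2, _⟩ | ⟨h1, h2, _⟩) <;> exact ⟨h1, h2⟩
    · rintro ⟨h1, h2⟩
      by_cases hv : ∃ v, v ∈ p ∧ v ∈ q
      · exact Or.inr ⟨h1, h2, hv⟩
      · push_neg at hv
        exact Or.inl ⟨h1, h2, fun v hvp => hv v hvp⟩
  have hdisj : Disjoint M I := by
    rw [Set.disjoint_left]
    rintro ⟨p, q⟩ ⟨-, -, h1⟩ ⟨-, -, v, hv1, hv2⟩
    exact h1 v hv1 hv2
  have hTf : (A1 ×ˢ A2).Finite := hA1f.prod hA2f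
  have hMf : M.Finite := hTf.subset (by rw [← hunion]; exact Set.subset_union_left)
  have hIf : I.Finite := hTf.subset (by rw [← hunion]; exact Set.subset_union_right)
  -- bijection between I and B1 ×ˢ B2
  have maps1 : Set.MapsTo swapPair I (B1 ×ˢ B2) := by
    rintro ⟨p, q⟩ ⟨h1, h2, hint⟩
    have hmeet : MeetEx p q :=
      (inter_iff_meetEx hla₁ hla₂ hlb₁ hlb₂ hb₁₂ h1 h2).1 hint
    obtain ⟨hs1, hs2, -, -⟩ := swap_main hla₁ hla₂ hlb₁ hlb₂ h1 h2 hmeet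
    exact ⟨hs1, hs2⟩
  have maps2 : Set.MapsTo swapPair (B1 ×ˢ B2) I := by
    rintro ⟨p, q⟩ ⟨h1, h2⟩
    have hmeet : MeetEx p q := bpair_meet hn hk h1 h2
    obtain ⟨hs1, hs2, hm', -⟩ := swap_main hla₁ hla₂ hlb₂ hlb₁ h1 h2 hmeet
    refine ⟨hs1, hs2, ?_⟩
    exact (inter_iff_meetEx hla₁ hla₂ hlb₁ hlb₂ hb₁₂ hs1 hs2).2
      (by simpa using hm')
  have hinv1 : ∀ pq ∈ I, swapPair (swapPair pq) = pq := by
    rintro ⟨p, q⟩ ⟨h1, h2, hint⟩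
    have hmeet : MeetEx p q :=
      (inter_iff_meetEx hla₁ hla₂ hlb₁ hlb₂ hb₁₂ h1 h2).1 hint
    exact (swap_main hla₁ hla₂ hlb₁ hlb₂ h1 h2 hmeet).2.2.2
  have hinv2 : ∀ pq ∈ B1 ×ˢ B2, swapPair (swapPair pq) = pq := by
    rintro ⟨p, q⟩ ⟨h1, h2⟩
    exact (swap_main hla₁ hla₂ hlb₂ hlb₁ h1 h2 (bpair_meet hn hk h1 h2)).2.2.2
  have hbij : Set.BijOn swapPair I (B1 ×ˢ B2) :=
    Set.InvOn.bijOn ⟨hinv1, hinv2⟩ maps1 maps2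
  have hIcard : I.ncard = B1.ncard * B2.ncard := by
    rw [← ncard_sprod, ← hbij.image_eq, Set.ncard_image_of_injOn hbij.injOn]
  -- combine
  have hkey : M.ncard + I.ncard = A1.ncard * A2.ncard := by
    rw [← ncard_sprod, ← hunion, Set.ncard_union_eq hdisj hMf hIf]
  have hgoal : (M.ncard : ℤ) = (A1.ncard : ℤ) * A2.ncard - (B1.ncard : ℤ) * B2.ncard := by
    have h1 : (M.ncard : ℤ) + (I.ncard : ℤ) = (A1.ncard : ℤ) * (A2.ncard : ℤ) := by
      exact_mod_cast hkey
    have h2 : (I.ncard : ℤ) = (B1.ncard : ℤ) * (B2.ncard : ℤ) := by exact_mod_cast hIcard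
    linarith
  show (M.ncard : ℤ) = _
  rw [hgoal, hA1c, hA2c, hB1c]
  have e1 : intChoose (n + k - 1) ((k : ℤ) - 1) = ((n + k - 1).choose (k - 1) : ℤ) := by
    rw [intChoose, if_pos (by omega)]
    have h : ((k : ℤ) - 1).toNat = k - 1 := by omega
    rw [h]
  have e2 : intChoose (n + k - 1) (k : ℤ) = ((n + k - 1).choose k : ℤ) := by
    rw [intChoose, if_pos (by omega)]
    have h : ((k : ℕ) : ℤ).toNat = k := by omega
    rw [h]
  rw [e1, e2, ← hB2c]
  push_cast
  ring
end
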